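/- Bisimulation transfer property, forward direction (intermediate claim in the proof of Enforcement Transparency): let φ ∈ SHMLnf be closed and guarded and suppose p ∈ ⟦φ⟧. If p -μ-> p' for some μ ∈ Act ∪ {τ}, then there exists a closed formula ψ ∈ SHMLnf such that ⟦φ⟧e[p] -μ-> ⟦ψ⟧e[p'] and p' ∈ ⟦ψ⟧. -/

import Mathlib

set_option autoImplicit false

/-- A labelled transition system over observable actions `Act`;
`none` plays the role of the silent action τ. -/
structure LTS (Act : Type) where
  S : Type
  Tr : S → Option Act → S → Prop

namespace Enf

open scoped Classical

variable {Act : Type}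

/-- Zero or more silent steps. -/
def TauStar (L : LTS Act) : L.S → L.S → Prop :=
  Relation.ReflTransGen (fun p q => L.Tr p none q)

/-- The weak transition `p =a=> q`. -/
def WStep (L : LTS Act) (p : L.S) (a : Act) (q : L.S) : Prop :=
  ∃ p₁ p₂, TauStar L p p₁ ∧ L.Tr p₁ (some a) p₂ ∧ TauStar L p₂ q

/-- Weak trace `p =t=> q`. -/
inductive WTrace (L : LTS Act) : L.S → List Act → L.S → Prop
  | nil {p q : L.S} : TauStar L p q → WTrace L p [] q
  | cons {p r q : L.S} {a : Act} {t : List Act} :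
      WStep L p a r → WTrace L r t q → WTrace L p (a :: t) q

/-- SHML formulas: truth, falsehood, fixpoint variables, finite conjunctions,
modalities `[η]φ` (a guard set of actions together with an action-indexed
continuation, representing the symbolic action and the matching substitutions),
and greatest fixpoints. -/
inductive Frm (Act : Type) : Type where
  | tt : Frm Act
  | ff : Frm Act
  | var : ℕ → Frm Act
  | conj : (n : ℕ) → (Fin n → Frm Act) → Frm Act
  | box : Set Act → (Act → Frm Act) → Frm Act
  | max : ℕ → Frm Act → Frm Act

namespace Frm

/-- Free fixpoint variables. -/
def fv : Frm Act → Set ℕ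
  | .tt => ∅
  | .ff => ∅
  | .var X => {X}
  | .conj _ f => ⋃ i, fv (f i)
  | .box G k => ⋃ a ∈ G, fv (k a)
  | .max X φ => fv φ \ {X}

def Closed (φ : Frm Act) : Prop := fv φ = ∅

/-- Substitution `φ[ψ/X]` (of a closed formula `ψ`). -/
def subst : Frm Act → ℕ → Frm Act → Frm Act
  | .tt, _, _ => .tt
  | .ff, _, _ => .ff
  | .var Y, X, ψ => if Y = X then ψ else .var Y
  | .conj n f, X, ψ => .conj n (fun i => subst (f i) X ψ)
  | .box G k, X, ψ => .box G (fun a => subst (k a) X ψ)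
  | .max Y φ, X, ψ => if Y = X then .max Y φ else .max Y (subst φ X ψ)

/-- The normal-form fragment SHMLnf: conjunctions are conjunctions of
modalities with pairwise-disjoint guards, and each greatest fixpoint binds a
variable occurring free in its body. -/
inductive IsNF : Frm Act → Prop
  | tt : IsNF .tt
  | ff : IsNF .ff
  | var (X : ℕ) : IsNF (.var X)
  | conj (n : ℕ) (G : Fin n → Set Act) (k : Fin n → Act → Frm Act)
      (hdisj : ∀ i j : Fin n, i ≠ j → ∀ a : Act, a ∈ G i → a ∉ G j)
      (hk : ∀ i : Fin n, ∀ a ∈ G i, IsNF (k i a)) :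
      IsNF (.conj n fun i => .box (G i) (k i))
  | max (X : ℕ) (φ : Frm Act) (hfree : X ∈ fv φ) (hφ : IsNF φ) : IsNF (.max X φ)

/-- `gvar X φ`: the variable `X` does not occur unguarded (i.e. outside every
modality) in `φ`. -/
def gvar (X : ℕ) : Frm Act → Prop
  | .tt => True
  | .ff => True
  | .var Y => Y ≠ X
  | .conj _ f => ∀ i, gvar X (f i)
  | .box _ _ => True
  | .max Y φ => Y = X ∨ gvar X φ

/-- A formula is guarded if every occurrence of a fixpoint variable lies
beneath a modality. -/
def Guarded : Frm Act → Prop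
  | .tt => True
  | .ff => True
  | .var _ => True
  | .conj _ f => ∀ i, Guarded (f i)
  | .box G k => ∀ a ∈ G, Guarded (k a)
  | .max X φ => gvar X φ ∧ Guarded φ

/-- Number of top-level greatest-fixpoint binders. -/
def topMax : Frm Act → ℕ
  | .max _ φ => topMax φ + 1
  | _ => 0

end Frm

/-- Denotational semantics of (possibly open) formulas, relative to an
environment mapping fixpoint variables to sets of states; `max` is interpreted
as the greatest fixpoint of the induced monotone map. -/
def sem (L : LTS Act) : Frm Act → (ℕ → Set L.S) → Set L.S
  | .tt, _ => Set.univ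
  | .ff, _ => ∅
  | .var X, ρ => ρ X
  | .conj _ f, ρ => ⋂ i, sem L (f i) ρ
  | .box G k, ρ => {p | ∀ a ∈ G, ∀ q, WStep L p a q → q ∈ sem L (k a) ρ}
  | .max X φ, ρ => ⋃₀ {S | S ⊆ sem L φ (Function.update ρ X S)}

/-- Semantics of closed formulas. -/
def Sem (L : LTS Act) (φ : Frm Act) : Set L.S := sem L φ fun _ => ∅

/-- Satisfiability. -/
def SatIn (L : LTS Act) (φ : Frm Act) : Prop := (Sem L φ).Nonempty

/-- The violation relation `p ⊨v^t φ`, defined as the least relation closed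
under the given rules. -/
inductive Viol (L : LTS Act) : L.S → List Act → Frm Act → Prop
  | ff (p : L.S) : Viol L p [] .ff
  | conj {p : L.S} {t : List Act} {n : ℕ} {f : Fin n → Frm Act} (j : Fin n) :
      Viol L p t (f j) → Viol L p t (.conj n f)
  | box {p p' : L.S} {t : List Act} {a : Act} {G : Set Act} {k : Act → Frm Act} :
      a ∈ G → WStep L p a p' → Viol L p' t (k a) → Viol L p (a :: t) (.box G k)
  | max {p : L.S} {t : List Act} {X : ℕ} {φ : Frm Act} :
      Viol L p t (Frm.subst φ X (.max X φ)) → Viol L p t (.max X φ)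

/-- Transducers (enforcement monitors): identity, symbolic transformation
prefixes (a guard set of extended input actions, with `none` standing for the
insertion pattern •, an output per matched input, with `none` standing for τ,
and a continuation per matched input), finite selections, recursion, and
recursion variables. -/
inductive Trn (Act : Type) : Type where
  | id : Trn Act
  | prf : Set (Option Act) → (Option Act → Option Act) → (Option Act → Trn Act) → Trn Act
  | sel : (n : ℕ) → (Fin n → Trn Act) → Trn Act
  | fix : ℕ → Trn Act → Trn Act
  | var : ℕ → Trn Act

namespace Trn

def tsubst : Trn Act → ℕ → Trn Act → Trn Act
  | .id, _, _ => .id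
  | .prf G out k, x, s => .prf G out fun γ => tsubst (k γ) x s
  | .sel n f, x, s => .sel n fun i => tsubst (f i) x s
  | .fix y e, x, s => if y = x then .fix y e else .fix y (tsubst e x s)
  | .var y, x, s => if y = x then s else .var y

end Trn

/-- Transducer transitions: labels are pairs (input, output) where input
`none` is the insertion pattern • and output `none` is τ. -/
inductive TStep : Trn Act → Option Act × Option Act → Trn Act → Prop
  | id (a : Act) : TStep .id (some a, some a) .id
  | prf {G : Set (Option Act)} {out : Option Act → Option Act}
      {k : Option Act → Trn Act} {γ : Option Act} (h : γ ∈ G) :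
      TStep (.prf G out k) (γ, out γ) (k γ)
  | sel {n : ℕ} {f : Fin n → Trn Act} {l : Option Act × Option Act}
      {e' : Trn Act} (i : Fin n) (h : TStep (f i) l e') :
      TStep (.sel n f) l e'
  | fix {x : ℕ} {e : Trn Act} {l : Option Act × Option Act} {e' : Trn Act}
      (h : TStep (Trn.tsubst e x (.fix x e)) l e') :
      TStep (.fix x e) l e'

/-- Instrumentation of a transducer on a system. -/
inductive IStep (L : LTS Act) : Trn Act × L.S → Option Act → Trn Act × L.S → Prop
  | trn {e e' : Trn Act} {p p' : L.S} {a : Act} {μ : Option Act} :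
      L.Tr p (some a) p' → TStep e (some a, μ) e' → IStep L (e, p) μ (e', p')
  | asy {e : Trn Act} {p p' : L.S} :
      L.Tr p none p' → IStep L (e, p) none (e, p')
  | ins {e e' : Trn Act} {p : L.S} {μ : Option Act} :
      TStep e (none, μ) e' → IStep L (e, p) μ (e', p)
  | ter {e : Trn Act} {p p' : L.S} {a : Act} :
      L.Tr p (some a) p' →
      (∀ μ e', ¬ TStep e (some a, μ) e') →
      (∀ μ e', ¬ TStep e (none, μ) e') →
      IStep L (e, p) (some a) (Trn.id, p')

/-- The LTS of monitored systems `e[p]`. -/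
def instLTS (L : LTS Act) : LTS Act := ⟨Trn Act × L.S, IStep L⟩

/-- Strong bisimulations between (the state spaces of) two LTSs. -/
def IsBisim (L₁ L₂ : LTS Act) (R : L₁.S → L₂.S → Prop) : Prop :=
  ∀ s r, R s r →
    (∀ μ s', L₁.Tr s μ s' → ∃ r', L₂.Tr r μ r' ∧ R s' r') ∧
    (∀ μ r', L₂.Tr r μ r' → ∃ s', L₁.Tr s μ s' ∧ R s' r')

/-- Strong bisimilarity. -/
def Bisim (L₁ L₂ : LTS Act) (s : L₁.S) (r : L₂.S) : Prop :=
  ∃ R, IsBisim L₁ L₂ R ∧ R s r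

/-- The synthesis function `⟦-⟧e` from SHMLnf formulas to transducers:
formula variable `X` becomes monitor variable `X+1`; `tt` and `ff` become the
identity monitor; `max X.φ` becomes the corresponding recursive monitor; and a
normalised conjunction of modalities becomes a recursive selection (on the
fresh variable `0`) of symbolic prefixes that suppress (output τ, continue as
the recursion variable) actions whose continuation formula is `ff` and pass
through all other matched actions, continuing with the synthesis of the
respective continuation formula. -/
noncomputable def synth : Frm Act → Trn Act
  | .tt => .id
  | .ff => .id
  | .var X => .var (X + 1)
  | .max X φ => .fix (X + 1) (synth φ)
  | .box G k =>
      .prf {γ | ∃ a ∈ G, γ = some a}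
        (fun γ =>
          match γ with
          | some a => if k a = Frm.ff then none else some a
          | none => none)
        (fun γ =>
          match γ with
          | some a => if k a = Frm.ff then Trn.var 0 else synth (k a)
          | none => .id)
  | .conj n f => .fix 0 (.sel n fun i => synth (f i))

/-- Fuelled residual function (the fuel is consumed by fixpoint unfoldings;
on guarded closed SHMLnf formulas `topMax φ + 1` units of fuel suffice). -/
noncomputable def afterFuel : ℕ → Frm Act → Act → Frm Act
  | 0, _, _ => .tt
  | n + 1, φ, a =>
    match φ with
    | .max X ψ => afterFuel n (Frm.subst ψ X (.max X ψ)) a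
    | .conj m f =>
        if h : ∃ i : Fin m, ∃ G : Set Act, ∃ k : Act → Frm Act,
            f i = Frm.box G k ∧ a ∈ G
        then h.choose_spec.choose_spec.choose a
        else .tt
    | ψ => ψ

/-- The residual `after(φ, a)` of a guarded closed SHMLnf formula. -/
noncomputable def after (φ : Frm Act) (a : Act) : Frm Act :=
  afterFuel (Frm.topMax φ + 1) φ a

/-- Satisfaction relations (the coinductive rules of `⊨s`). -/
def IsSatRel (L : LTS Act) (R : L.S → Frm Act → Prop) : Prop :=
  (∀ p, ¬ R p .ff) ∧
  (∀ p (n : ℕ) (f : Fin n → Frm Act), R p (.conj n f) → ∀ i, R p (f i)) ∧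
  (∀ p (G : Set Act) (k : Act → Frm Act), R p (.box G k) →
      ∀ a ∈ G, ∀ q, WStep L p a q → R q (k a)) ∧
  (∀ p (X : ℕ) (φ : Frm Act), R p (.max X φ) → R p (Frm.subst φ X (.max X φ)))

/-- The largest satisfaction relation `⊨s`. -/
def SatCo (L : LTS Act) (p : L.S) (φ : Frm Act) : Prop :=
  ∃ R, IsSatRel L R ∧ R p φ

/-!
A τ-step of the system is absorbed by the monitor (rule iAsy), and every `⟦φ⟧` is closed under
τ-steps, so `ψ = φ` works. For an observable step `a`, unfold the top-level fixpoints of `φ`: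
unfolding commutes with synthesis, and guardedness makes it strictly decrease the number of
top-level binders. This leaves a conjunction of modalities. If a guard matches `a`, its
continuation `ψ` holds at `p'`, hence is not `ff`, and the monitor passes `a` on and continues as
`⟦ψ⟧e`; if none matches, the monitor has no transition and rule iTer turns it into `id = ⟦tt⟧e`.
-/

namespace Frm

theorem fv_subst (ψ : Frm Act) (X : ℕ) {χ : Frm Act} (hχ : Closed χ) :
    fv (subst ψ X χ) = fv ψ \ {X} := by
  induction ψ with
  | tt | ff => simp [subst, fv]
  | var Y =>
    rcases eq_or_ne Y X with rfl | hne
    · simp only [subst, if_true, fv, Set.sdiff_self]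
      exact hχ
    · simp [subst, hne, fv, Ne.symm hne]
  | conj n f ih => simp only [subst, fv, Set.iUnion_sdiff, ih]
  | box G k ih => simp only [subst, fv, Set.iUnion_sdiff, ih]
  | max Y φ ih =>
    rcases eq_or_ne Y X with rfl | hne
    · simp [subst, fv]
    · simp only [subst, if_neg hne, fv, ih, Set.sdiff_sdiff, Set.union_comm]

theorem Closed.unfold {X : ℕ} {ψ : Frm Act} (h : Closed (.max X ψ)) :
    Closed (subst ψ X (.max X ψ)) :=
  (fv_subst ψ X h).trans h

theorem Closed.of_mem_conj_box {n : ℕ} {G : Fin n → Set Act} {k : Fin n → Act → Frm Act}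
    (h : Closed (.conj n fun i => .box (G i) (k i))) {i : Fin n} {a : Act} (ha : a ∈ G i) :
    Closed (k i a) :=
  Set.subset_empty_iff.1 fun _ hX => h ▸ Set.mem_iUnion.2 ⟨i, Set.mem_biUnion ha hX⟩

theorem gvar_of_notMem_fv {Y : ℕ} {χ : Frm Act} (h : Y ∉ fv χ) : gvar Y χ := by
  induction χ with
  | tt | ff | box => trivial
  | var Z => exact fun hZ => h (by simp [fv, hZ])
  | conj n f ih => exact fun i => ih i fun hY => h (Set.mem_iUnion.2 ⟨i, hY⟩)
  | max Z φ ih =>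
    rcases eq_or_ne Z Y with rfl | hne
    · exact .inl rfl
    · exact .inr (ih fun hY => h ⟨hY, hne.symm⟩)

theorem gvar_subst {Y : ℕ} {ψ : Frm Act} (X : ℕ) {χ : Frm Act}
    (hψ : gvar Y ψ) (hχ : gvar Y χ) : gvar Y (subst ψ X χ) := by
  induction ψ with
  | tt | ff | box => trivial
  | var Z =>
    rcases eq_or_ne Z X with rfl | hne
    · simpa [subst] using hχ
    · simpa [subst, hne] using hψ
  | conj n f ih => exact fun i => ih i (hψ i)
  | max Z φ ih =>
    rcases eq_or_ne Z X with rfl | hne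
    · simpa [subst] using hψ
    · simp only [subst, if_neg hne]
      exact hψ.imp_right ih

theorem Guarded.subst {ψ : Frm Act} (hψ : Guarded ψ) (X : ℕ) {χ : Frm Act}
    (hχ : Guarded χ) (hcl : Closed χ) : Guarded (subst ψ X χ) := by
  induction ψ with
  | tt | ff => trivial
  | var Z =>
    rcases eq_or_ne Z X with rfl | hne
    · simpa [Frm.subst] using hχ
    · simp [Frm.subst, hne, Guarded]
  | conj n f ih => exact fun i => ih i (hψ i)
  | box G k ih => exact fun a ha => ih a (hψ a ha)
  | max Z φ ih =>
    rcases eq_or_ne Z X with rfl | hne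
    · simpa [Frm.subst] using hψ
    · simp only [Frm.subst, if_neg hne]
      exact ⟨gvar_subst X hψ.1 (gvar_of_notMem_fv (hcl ▸ Set.notMem_empty Z)), ih hψ.2⟩

theorem IsNF.subst {ψ : Frm Act} (hψ : IsNF ψ) (X : ℕ) {χ : Frm Act}
    (hχ : IsNF χ) (hcl : Closed χ) : IsNF (subst ψ X χ) := by
  induction hψ with
  | tt => exact .tt
  | ff => exact .ff
  | var Y =>
    rcases eq_or_ne Y X with rfl | hne
    · simpa [Frm.subst] using hχ
    · simpa [Frm.subst, hne] using IsNF.var Y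
  | conj n G k hdisj hk ih => exact .conj n G _ hdisj ih
  | max Y φ hfree hφ ih =>
    rcases eq_or_ne Y X with rfl | hne
    · simpa [Frm.subst] using IsNF.max Y φ hfree hφ
    · simp only [Frm.subst, if_neg hne]
      exact .max Y _ (fv_subst φ X hcl ▸ ⟨hfree, hne⟩) ih

theorem topMax_subst_le {ψ : Frm Act} {X : ℕ} (χ : Frm Act) (hg : gvar X ψ) :
    topMax (subst ψ X χ) ≤ topMax ψ := by
  induction ψ with
  | tt | ff | conj | box => simp [subst, topMax]
  | var Y => simp [subst, show Y ≠ X from hg, topMax]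
  | max Y φ ih =>
    rcases eq_or_ne Y X with rfl | hne
    · simp [subst]
    · simp only [subst, if_neg hne, topMax]
      exact Nat.succ_le_succ (ih (hg.resolve_left hne))

theorem subst_eq_ff_iff {ψ : Frm Act} {X : ℕ} {χ : Frm Act} (hχ : χ ≠ .ff) :
    subst ψ X χ = .ff ↔ ψ = .ff := by
  cases ψ with
  | var Y => by_cases h : Y = X <;> simp [subst, h, hχ]
  | max Y φ => by_cases h : Y = X <;> simp [subst, h]
  | _ => simp [subst]

end Frm

section Semantics

variable {L : LTS Act}

open Enf.Frm Function

theorem sem_monotone (φ : Frm Act) : Monotone (sem L φ) := by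
  induction φ with
  | tt | ff => exact fun _ _ _ => le_rfl
  | var X => exact fun _ _ h => h X
  | conj n f ih => exact fun _ _ h => Set.iInter_mono fun i => ih i h
  | box G k ih => exact fun _ _ h p hp a ha q hq => ih a h (hp a ha q hq)
  | max X φ ih =>
    rintro ρ₁ ρ₂ h p ⟨S, hS, hp⟩
    exact ⟨S, hS.trans (ih (update_le_update_iff.2 ⟨le_rfl, fun Y _ => h Y⟩)), hp⟩

def semBody (L : LTS Act) (X : ℕ) (φ : Frm Act) (ρ : ℕ → Set L.S) : Set L.S →o Set L.S :=
  ⟨fun S => sem L φ (update ρ X S), fun _ _ h => sem_monotone φ (update_le_update_iff'.2 h)⟩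

theorem sem_max (X : ℕ) (φ : Frm Act) (ρ : ℕ → Set L.S) :
    sem L (.max X φ) ρ = (semBody L X φ ρ).gfp := rfl

theorem sem_congr (φ : Frm Act) {ρ₁ ρ₂ : ℕ → Set L.S} (h : ∀ X ∈ fv φ, ρ₁ X = ρ₂ X) :
    sem L φ ρ₁ = sem L φ ρ₂ := by
  induction φ generalizing ρ₁ ρ₂ with
  | tt | ff => rfl
  | var X => exact h X rfl
  | conj n f ih =>
    exact Set.iInter_congr fun i => ih i fun X hX => h X (Set.mem_iUnion.2 ⟨i, hX⟩)
  | box G k ih =>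
    ext p
    refine forall₂_congr fun a ha => forall₂_congr fun q _ => ?_
    rw [ih a fun X hX => h X (Set.mem_biUnion ha hX)]
  | max X φ ih =>
    refine congrArg Set.sUnion (Set.ext fun S => ?_)
    change S ⊆ _ ↔ S ⊆ _
    rw [ih fun Y hY => ?_]
    rcases eq_or_ne Y X with rfl | hne
    · simp
    · simpa [update_of_ne hne] using h Y ⟨hY, hne⟩

theorem sem_of_closed {φ : Frm Act} (hφ : Closed φ) (ρ : ℕ → Set L.S) : sem L φ ρ = Sem L φ :=
  sem_congr φ fun X hX => absurd (hφ ▸ hX) (Set.notMem_empty X)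

theorem sem_subst (ψ : Frm Act) (X : ℕ) {χ : Frm Act} (hχ : Closed χ) (ρ : ℕ → Set L.S) :
    sem L (subst ψ X χ) ρ = sem L ψ (update ρ X (Sem L χ)) := by
  induction ψ generalizing ρ with
  | tt | ff => rfl
  | var Y =>
    rcases eq_or_ne Y X with rfl | hne
    · simpa [subst, sem] using sem_of_closed hχ ρ
    · simp [subst, hne, sem]
  | conj n f ih => exact Set.iInter_congr fun i => ih i ρ
  | box G k ih =>
    ext p
    refine forall₂_congr fun a _ => forall₂_congr fun q _ => ?_
    rw [ih a ρ]
  | max Y φ ih =>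
    rcases eq_or_ne Y X with rfl | hne
    · simp only [subst, if_true]
      exact sem_congr _ fun Z hZ => (update_of_ne hZ.2 _ _).symm
    · simp only [subst, if_neg hne, sem, ih, update_comm hne]

theorem Sem_unfold {X : ℕ} {ψ : Frm Act} (hcl : Closed (.max X ψ)) :
    Sem L (subst ψ X (.max X ψ)) = Sem L (.max X ψ) := by
  rw [Sem, sem_subst ψ X hcl]
  exact (semBody L X ψ _).map_gfp

theorem WStep.of_tr {p p' : L.S} {a : Act} (h : L.Tr p (some a) p') : WStep L p a p' :=
  ⟨p, p', .refl, h, .refl⟩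

def TauClosed (L : LTS Act) (S : Set L.S) : Prop :=
  ∀ ⦃q q'⦄, q ∈ S → L.Tr q none q' → q' ∈ S

theorem TauClosed.mem_of_tauStar {S : Set L.S} (hS : TauClosed L S) {q q' : L.S}
    (hq : q ∈ S) (h : TauStar L q q') : q' ∈ S := by
  induction h with
  | refl => exact hq
  | tail _ hstep ih => exact hS ih hstep

theorem tauClosed_sem (φ : Frm Act) {ρ : ℕ → Set L.S} (hρ : ∀ X, TauClosed L (ρ X)) :
    TauClosed L (sem L φ ρ) := by
  induction φ generalizing ρ with
  | tt => exact fun _ _ _ _ => trivial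
  | ff => exact fun _ _ h _ => h
  | var X => exact hρ X
  | conj n f ih =>
    exact fun q q' hq hs => Set.mem_iInter.2 fun i => ih i hρ (Set.mem_iInter.1 hq i) hs
  | box G k ih =>
    rintro q q' hq hs a ha r ⟨q₁, q₂, h₁, h₂, h₃⟩
    exact hq a ha r ⟨q₁, q₂, .head hs h₁, h₂, h₃⟩
  | max X φ ih =>
    -- the τ-closure of the greatest fixpoint is again a post-fixpoint
    set T := {q' | ∃ q ∈ sem L (.max X φ) ρ, TauStar L q q'}
    have hT : TauClosed L T := fun _ _ ⟨q, hq, h⟩ hs => ⟨q, hq, h.tail hs⟩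
    have hpost : T ≤ semBody L X φ ρ T := by
      rintro q' ⟨q, hq, h⟩
      refine (ih fun Y => ?_).mem_of_tauStar ?_ h
      · rcases eq_or_ne Y X with rfl | hne
        · simpa using hT
        · simpa [update_of_ne hne] using hρ Y
      · rw [sem_max, ← OrderHom.map_gfp] at hq
        exact sem_monotone φ (update_le_update_iff'.2 fun r hr => (⟨r, hr, .refl⟩ : r ∈ T)) hq
    exact fun q q' hq hs => OrderHom.le_gfp _ hpost (show q' ∈ T from ⟨q, hq, .single hs⟩)

theorem tauClosed_Sem (φ : Frm Act) : TauClosed L (Sem L φ) :=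
  tauClosed_sem φ fun _ _ _ h _ => h

end Semantics

theorem synth_subst (ψ : Frm Act) (X : ℕ) {χ : Frm Act} (hχ : χ ≠ .ff) :
    synth (ψ.subst X χ) = Trn.tsubst (synth ψ) (X + 1) (synth χ) := by
  induction ψ with
  | tt | ff => rfl
  | var Y => by_cases h : Y = X <;> simp [Frm.subst, synth, Trn.tsubst, h]
  | conj n f ih => simp only [Frm.subst, synth, Trn.tsubst, ih, if_neg (Nat.succ_ne_zero X).symm]
  | box G k ih =>
    simp only [Frm.subst, synth, Trn.tsubst]
    congr 1 <;> funext γ <;> rcases γ with _ | a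
    all_goals try rfl
    all_goals by_cases hff : k a = .ff <;> simp [hff, Frm.subst_eq_ff_iff hχ, ih, Trn.tsubst]
  | max Y φ ih =>
    by_cases h : Y = X
    · simp [Frm.subst, synth, Trn.tsubst, h]
    · simp [Frm.subst, synth, Trn.tsubst, h, ih]

-- In normal form every modality sits inside a conjunction, whose monitor binds variable `0`.
theorem tsubst_synth_zero {ψ : Frm Act} (h : ψ.IsNF) (s : Trn Act) :
    Trn.tsubst (synth ψ) 0 s = synth ψ := by
  induction h with
  | tt | ff => rfl
  | var X => simp [synth, Trn.tsubst]
  | conj => simp [synth, Trn.tsubst]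
  | max X φ _ _ ih => simp [synth, Trn.tsubst, ih]

theorem tStep_fix_iff {x : ℕ} {e : Trn Act} {l : Option Act × Option Act} {e' : Trn Act} :
    TStep (.fix x e) l e' ↔ TStep (Trn.tsubst e x (.fix x e)) l e' :=
  ⟨fun | .fix h => h, .fix⟩

theorem tStep_sel_iff {n : ℕ} {f : Fin n → Trn Act} {l : Option Act × Option Act}
    {e' : Trn Act} : TStep (.sel n f) l e' ↔ ∃ i, TStep (f i) l e' :=
  ⟨fun | .sel i h => ⟨i, h⟩, fun ⟨i, h⟩ => .sel i h⟩

theorem tStep_prf_iff {G : Set (Option Act)} {out : Option Act → Option Act}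
    {k : Option Act → Trn Act} {l : Option Act × Option Act} {e' : Trn Act} :
    TStep (.prf G out k) l e' ↔ l.1 ∈ G ∧ l.2 = out l.1 ∧ e' = k l.1 :=
  ⟨fun | .prf h => ⟨h, rfl, rfl⟩, fun ⟨h, h₂, h₃⟩ => by
    obtain ⟨γ, μ⟩ := l
    obtain rfl : μ = out γ := h₂
    exact h₃ ▸ .prf h⟩

theorem IStep.fix_of_unfold {L : LTS Act} {x : ℕ} {e : Trn Act} {p : L.S} {a : Act}
    {q : Trn Act × L.S} (h : IStep L (Trn.tsubst e x (.fix x e), p) (some a) q) :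
    IStep L (.fix x e, p) (some a) q := by
  cases h with
  | trn hp he => exact .trn hp (.fix he)
  | ins he => exact .ins (.fix he)
  | ter hp hna hins =>
    exact .ter hp (fun μ e' he => hna μ e' (tStep_fix_iff.1 he))
      (fun μ e' he => hins μ e' (tStep_fix_iff.1 he))

section Conj

variable {n : ℕ} {G : Fin n → Set Act} {k : Fin n → Act → Frm Act}

theorem tStep_synth_conj_of_mem (hk : ∀ i, ∀ a ∈ G i, (k i a).IsNF) {i : Fin n} {a : Act}
    (ha : a ∈ G i) (hff : k i a ≠ .ff) :
    TStep (synth (.conj n fun i => .box (G i) (k i))) (some a, some a) (synth (k i a)) := by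
  simp only [synth, tStep_fix_iff, Trn.tsubst, tStep_sel_iff]
  refine ⟨i, tStep_prf_iff.2 ?_⟩
  simp [hff, tsubst_synth_zero (hk i a ha), ha]

theorem exists_mem_of_tStep_synth_conj {γ μ : Option Act} {e' : Trn Act}
    (h : TStep (synth (.conj n fun i => .box (G i) (k i))) (γ, μ) e') :
    ∃ i, ∃ a ∈ G i, γ = some a := by
  simp only [synth, tStep_fix_iff, Trn.tsubst, tStep_sel_iff, tStep_prf_iff] at h
  obtain ⟨i, ⟨a, ha, rfl⟩, -⟩ := h
  exact ⟨i, a, ha, rfl⟩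

end Conj

section Transfer

variable {L : LTS Act}

theorem transfer_conj {n : ℕ} {G : Fin n → Set Act} {k : Fin n → Act → Frm Act}
    (hclosed : Frm.Closed (.conj n fun i => .box (G i) (k i)))
    (hk : ∀ i, ∀ a ∈ G i, (k i a).IsNF) {p p' : L.S} {a : Act}
    (hsat : p ∈ Sem L (.conj n fun i => .box (G i) (k i))) (hstep : L.Tr p (some a) p') :
    ∃ ψ : Frm Act, ψ.Closed ∧ ψ.IsNF ∧
      IStep L (synth (.conj n fun i => .box (G i) (k i)), p) (some a) (synth ψ, p') ∧
      p' ∈ Sem L ψ := by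
  by_cases hmem : ∃ i, a ∈ G i
  · obtain ⟨i, ha⟩ := hmem
    have hp' : p' ∈ Sem L (k i a) := Set.mem_iInter.1 hsat i a ha p' (.of_tr hstep)
    have hff : k i a ≠ .ff := by rintro h; rw [h] at hp'; exact hp'
    exact ⟨k i a, hclosed.of_mem_conj_box ha, hk i a ha,
      .trn hstep (tStep_synth_conj_of_mem hk ha hff), hp'⟩
  · refine ⟨.tt, rfl, .tt, .ter hstep (fun μ e' h => ?_) (fun μ e' h => ?_), trivial⟩
    · obtain ⟨i, b, hb, hab⟩ := exists_mem_of_tStep_synth_conj h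
      exact hmem ⟨i, Option.some_injective _ hab ▸ hb⟩
    · obtain ⟨_, _, _, h⟩ := exists_mem_of_tStep_synth_conj h
      exact nomatch h

theorem transfer_some {φ : Frm Act} (hclosed : φ.Closed) (hnf : φ.IsNF) (hguard : φ.Guarded)
    {p p' : L.S} {a : Act} (hsat : p ∈ Sem L φ) (hstep : L.Tr p (some a) p') :
    ∃ ψ : Frm Act, ψ.Closed ∧ ψ.IsNF ∧
      IStep L (synth φ, p) (some a) (synth ψ, p') ∧ p' ∈ Sem L ψ := by
  match φ, hnf with
  | _, .tt => exact ⟨.tt, hclosed, .tt, .trn hstep (.id a), trivial⟩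
  | _, .ff => exact hsat.elim
  | _, .var X => exact absurd (hclosed ▸ rfl : X ∈ (∅ : Set ℕ)) (Set.notMem_empty X)
  | _, .conj n G k _ hk => exact transfer_conj hclosed hk hsat hstep
  | _, .max X ψ hfree hψ =>
    have hdec := Frm.topMax_subst_le (.max X ψ) hguard.1
    obtain ⟨ψ', hclosed', hnf', hIStep, hsat'⟩ := transfer_some hclosed.unfold
      (hψ.subst X (.max X ψ hfree hψ) hclosed) (hguard.2.subst X hguard hclosed)
      ((Sem_unfold hclosed).symm ▸ hsat) hstep
    rw [synth_subst ψ X (χ := .max X ψ) (fun h => nomatch h)] at hIStep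
    exact ⟨ψ', hclosed', hnf', hIStep.fix_of_unfold, hsat'⟩
termination_by φ.topMax
decreasing_by exact Nat.lt_succ_of_le hdec

end Transfer

/-- bisimulation transfer property, forward direction: for
closed guarded SHMLnf φ with p ∈ ⟦φ⟧, if p -μ-> p' then there is a closed
SHMLnf formula ψ with ⟦φ⟧e[p] -μ-> ⟦ψ⟧e[p'] and p' ∈ ⟦ψ⟧. -/
theorem transfer_forward (Act : Type) (L : LTS Act) (φ : Frm Act)
    (hclosed : φ.Closed) (hnf : φ.IsNF) (hguard : φ.Guarded)
    (p p' : L.S) (μ : Option Act)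
    (hsat : p ∈ Sem L φ) (hstep : L.Tr p μ p') :
    ∃ ψ : Frm Act, ψ.Closed ∧ ψ.IsNF ∧
      IStep L (synth φ, p) μ (synth ψ, p') ∧ p' ∈ Sem L ψ := by
  cases μ with
  | none => exact ⟨φ, hclosed, hnf, .asy hstep, tauClosed_Sem φ hsat hstep⟩
  | some a => exact transfer_some hclosed hnf hguard hsat hstep

end Enf
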